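/- The kernel L₂₂(t,s) := C₁(t₁,t)ᵀP₀C₁(t₁,s) + ∫_{max(t,s)}^{t₁} C₁(σ,t)ᵀP₁(σ)C₁(σ,s) dσ + ∫_t^{t₁}∫_s^{t₁} C₁(τ,t)ᵀP₂(τ,σ)C₁(σ,s) dσ dτ + R₂(t,s) satisfies ∫_{t₀}^{t₁}∫_{t₀}^{t₁} w(t)ᵀL₂₂(t,s)w(s) ds dt ≤ 0 for every w ∈ L²(t₀,t₁;ℝⁿ). -/

import Mathlib

open MeasureTheory Matrix intervalIntegral

attribute [local instance] Matrix.normedAddCommGroup Matrix.normedSpace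

/-!
Write `z(σ) = ∫_{t₀}^{σ} C₁(σ,x) w(x) dx`. Unfolding the kernel and exchanging the order of
integration (Fubini, all integrands being dominated by a multiple of `‖w(t)‖ ‖w(s)‖`), the
quadratic form of `L₂₂` becomes
`z(t₁)ᵀP₀z(t₁) + ∫ z(σ)ᵀP₁(σ)z(σ) dσ + ∫∫ z(τ)ᵀP₂(τ,σ)z(σ) dσ dτ + ∫∫ w(t)ᵀR₂(t,s)w(s) ds dt`,
and each of the four terms is nonpositive by hypothesis, `z` being bounded, hence in `L²`.
-/

open Function Set

section Norms

variable {l m k : Type*} [Fintype l] [Fintype m] [Fintype k]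

lemma abs_dotProduct_le_card_mul (a b : m → ℝ) :
    |a ⬝ᵥ b| ≤ Fintype.card m * ‖a‖ * ‖b‖ := by
  calc |a ⬝ᵥ b| ≤ ∑ i, ‖a‖ * ‖b‖ := by
        refine (Finset.abs_sum_le_sum_abs _ _).trans (Finset.sum_le_sum fun i _ => ?_)
        rw [abs_mul]
        exact mul_le_mul (norm_le_pi_norm a i) (norm_le_pi_norm b i) (abs_nonneg _)
          (norm_nonneg _)
    _ = Fintype.card m * ‖a‖ * ‖b‖ := by simp [mul_assoc]

lemma Matrix.norm_mulVec_le_card_mul (M : Matrix l m ℝ) (v : m → ℝ) :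
    ‖M *ᵥ v‖ ≤ Fintype.card m * ‖M‖ * ‖v‖ := by
  refine (pi_norm_le_iff_of_nonneg (by positivity)).2 fun i => ?_
  rw [Real.norm_eq_abs]
  refine (abs_dotProduct_le_card_mul (M i) v).trans ?_
  gcongr
  exact norm_le_pi_norm (M : l → m → ℝ) i

lemma Matrix.norm_mul_le_card_mul (A : Matrix l m ℝ) (B : Matrix m k ℝ) :
    ‖A * B‖ ≤ Fintype.card m * ‖A‖ * ‖B‖ := by
  refine (Matrix.norm_le_iff (by positivity)).2 fun i j => ?_
  rw [Matrix.mul_apply', Real.norm_eq_abs]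
  refine (abs_dotProduct_le_card_mul (A i) (Bᵀ j)).trans ?_
  gcongr
  · exact norm_le_pi_norm (A : l → m → ℝ) i
  · rw [← Matrix.norm_transpose B]
    exact norm_le_pi_norm (Bᵀ : k → m → ℝ) j

lemma abs_dotProduct_mulVec_le {a : l → ℝ} {M : Matrix l m ℝ} {b : m → ℝ} {A CM B : ℝ}
    (ha : ‖a‖ ≤ A) (hM : ‖M‖ ≤ CM) (hb : ‖b‖ ≤ B) :
    |a ⬝ᵥ (M *ᵥ b)| ≤ Fintype.card l * Fintype.card m * CM * (A * B) := by
  have := (norm_nonneg a).trans ha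
  have := (norm_nonneg M).trans hM
  calc |a ⬝ᵥ (M *ᵥ b)| ≤ Fintype.card l * ‖a‖ * (Fintype.card m * ‖M‖ * ‖b‖) :=
        (abs_dotProduct_le_card_mul a _).trans (by gcongr; exact M.norm_mulVec_le_card_mul b)
    _ ≤ Fintype.card l * A * (Fintype.card m * CM * B) := by gcongr
    _ = _ := by ring

lemma Matrix.norm_transpose_mul_mul_le {A : Matrix l m ℝ} {P : Matrix l k ℝ}
    {B : Matrix k m ℝ} {CA CP CB : ℝ} (hA : ‖A‖ ≤ CA) (hP : ‖P‖ ≤ CP) (hB : ‖B‖ ≤ CB) :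
    ‖Aᵀ * P * B‖ ≤ Fintype.card k * Fintype.card l * CA * CP * CB := by
  have := (norm_nonneg A).trans hA
  have := (norm_nonneg P).trans hP
  calc ‖Aᵀ * P * B‖ ≤ Fintype.card k * (Fintype.card l * ‖A‖ * ‖P‖) * ‖B‖ := by
        refine (Matrix.norm_mul_le_card_mul _ _).trans ?_
        gcongr
        simpa using Matrix.norm_mul_le_card_mul Aᵀ P
    _ ≤ Fintype.card k * (Fintype.card l * CA * CP) * CB := by gcongr
    _ = _ := by ring

lemma Matrix.norm_le_max_of_abs_le {A : Matrix l m ℝ} {C : ℝ} (h : ∀ i j, |A i j| ≤ C) :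
    ‖A‖ ≤ max C 0 :=
  (Matrix.norm_le_iff (le_max_right _ _)).2 fun i j => (h i j).trans (le_max_left _ _)

lemma dotProduct_transpose_mul_mul_mulVec (c : m → ℝ) (A : Matrix l m ℝ) (P : Matrix l k ℝ)
    (B : Matrix k m ℝ) (d : m → ℝ) :
    c ⬝ᵥ ((Aᵀ * P * B) *ᵥ d) = (A *ᵥ c) ⬝ᵥ (P *ᵥ (B *ᵥ d)) := by
  rw [← Matrix.mulVec_mulVec, ← Matrix.mulVec_mulVec, Matrix.dotProduct_mulVec c Aᵀ,
    Matrix.vecMul_transpose]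

end Norms

section Measurability

variable {X l m k : Type*} [MeasurableSpace X]

lemma Matrix.stronglyMeasurable_of_entries [Finite l] [Finite m] {A : X → Matrix l m ℝ}
    (h : ∀ i j, Measurable fun x => A x i j) : StronglyMeasurable A :=
  (measurable_pi_lambda _ fun i => measurable_pi_lambda _ (h i)).stronglyMeasurable

lemma MeasureTheory.StronglyMeasurable.dotProduct_mulVec [Fintype l] [Fintype m] {a : X → l → ℝ}
    {M : X → Matrix l m ℝ} {b : X → m → ℝ} (ha : StronglyMeasurable a)
    (hM : StronglyMeasurable M) (hb : StronglyMeasurable b) :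
    StronglyMeasurable fun x => a x ⬝ᵥ (M x *ᵥ b x) :=
  (continuous_fst.dotProduct (continuous_snd.fst.matrix_mulVec continuous_snd.snd)
    ).comp_stronglyMeasurable (ha.prodMk (hM.prodMk hb))

lemma MeasureTheory.StronglyMeasurable.transpose_mul_mul [Fintype l] [Fintype k]
    {A : X → Matrix l m ℝ} {P : X → Matrix l k ℝ} {B : X → Matrix k m ℝ} (hA : StronglyMeasurable A)
    (hP : StronglyMeasurable P) (hB : StronglyMeasurable B) :
    StronglyMeasurable fun x => (A x)ᵀ * P x * B x := by
  have hcont : Continuous fun q : Matrix l m ℝ × Matrix l k ℝ × Matrix k m ℝ =>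
      q.1ᵀ * q.2.1 * q.2.2 := by fun_prop
  -- stated separately: elaborating it against the goal times out
  have hcomp := hcont.comp_stronglyMeasurable (hA.prodMk (hP.prodMk hB))
  exact hcomp

end Measurability

-- Instance search does not see that the entrywise norm induces `Matrix.topologicalSpace`
-- (only unfolding the metric structures shows it); `Integrable` of matrix-valued maps needs this.
local instance {l m : Type*} [Fintype l] [Fintype m] : ContinuousENorm (Matrix l m ℝ) :=
  SeminormedAddGroup.toContinuousENorm

section IntegralComm

variable {X l m : Type*} [MeasurableSpace X] {μ : Measure X} [Fintype l] [Fintype m]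

lemma LinearMap.integral_comp_comm_of_finiteDimensional {E : Type*} [NormedAddCommGroup E]
    [NormedSpace ℝ E] [FiniteDimensional ℝ E] (L : E →ₗ[ℝ] ℝ) {φ : X → E}
    (hφ : Integrable φ μ) : ∫ x, L (φ x) ∂μ = L (∫ x, φ x ∂μ) :=
  (LinearMap.toContinuousLinearMap L).integral_comp_comm hφ

lemma integral_dotProduct_mulVec_right (a : l → ℝ) (M : Matrix l m ℝ) {h : X → m → ℝ}
    (hh : Integrable h μ) : ∫ x, a ⬝ᵥ (M *ᵥ h x) ∂μ = a ⬝ᵥ (M *ᵥ ∫ x, h x ∂μ) := by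
  classical
  simpa [Matrix.toLinearMap₂'_apply'] using
    (Matrix.toLinearMap₂' ℝ M a).integral_comp_comm_of_finiteDimensional hh

lemma integral_dotProduct_mulVec_left (M : Matrix l m ℝ) (b : m → ℝ) {f : X → l → ℝ}
    (hf : Integrable f μ) : ∫ x, f x ⬝ᵥ (M *ᵥ b) ∂μ = (∫ x, f x ∂μ) ⬝ᵥ (M *ᵥ b) := by
  classical
  simpa [Matrix.toLinearMap₂'_apply'] using
    ((Matrix.toLinearMap₂' ℝ M).flip b).integral_comp_comm_of_finiteDimensional hf

lemma integral_dotProduct_mulVec_matrix (a : l → ℝ) (b : m → ℝ) {N : X → Matrix l m ℝ}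
    (hN : Integrable N μ) : ∫ x, a ⬝ᵥ (N x *ᵥ b) ∂μ = a ⬝ᵥ ((∫ x, N x ∂μ) *ᵥ b) := by
  classical
  simpa [Matrix.toLinearMap₂'_apply'] using
    ((LinearMap.applyₗ b).comp ((LinearMap.applyₗ a).comp
      (Matrix.toLinearMap₂' ℝ : Matrix l m ℝ ≃ₗ[ℝ] _).toLinearMap)
      ).integral_comp_comm_of_finiteDimensional hN

lemma integrable_indicator_of_ae_bound {E : Type*} [NormedAddCommGroup E] [IsFiniteMeasure μ]
    {S : Set X} (hS : MeasurableSet S) {F : X → E} (hF : AEStronglyMeasurable F μ) {C : ℝ}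
    (hFC : ∀ᵐ x ∂μ, x ∈ S → ‖F x‖ ≤ C) : Integrable (S.indicator F) μ :=
  (integrable_indicator_iff hS).2 (Integrable.of_bound hF.restrict C ((ae_restrict_iff' hS).2 hFC))

lemma integrable_uncurry_dotProduct_mulVec [SFinite μ] {R : X → X → Matrix l m ℝ}
    {v : X → l → ℝ} {w : X → m → ℝ} {C : ℝ} (hR : StronglyMeasurable (uncurry R))
    (hRC : ∀ᵐ q ∂(μ.prod μ), ‖R q.1 q.2‖ ≤ C) (hv : Integrable v μ) (hw : Integrable w μ) :
    Integrable (uncurry fun x y => v x ⬝ᵥ (R x y *ᵥ w y)) (μ.prod μ) := by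
  refine Integrable.mono' ((hv.norm.mul_prod hw.norm).const_mul
    (Fintype.card l * Fintype.card m * C)) ?_ ?_
  · have hcont : Continuous fun p : (l → ℝ) × Matrix l m ℝ × (m → ℝ) =>
        p.1 ⬝ᵥ (p.2.1 *ᵥ p.2.2) :=
      continuous_fst.dotProduct (continuous_snd.fst.matrix_mulVec continuous_snd.snd)
    exact hcont.comp_aestronglyMeasurable
      (hv.1.comp_fst.prodMk (hR.aestronglyMeasurable.prodMk hw.1.comp_snd))
  · filter_upwards [hRC] with q hq
    exact abs_dotProduct_mulVec_le le_rfl hq le_rfl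

end IntegralComm

section DoubleIntegral

variable {α : Type*} [MeasurableSpace α] {μ : Measure α} [SFinite μ]

def HasNonposDoubleIntegral (μ : Measure α) (k : α → α → ℝ) : Prop :=
  Integrable (uncurry k) (μ.prod μ) ∧ ∫ x, ∫ y, k x y ∂μ ∂μ ≤ 0

lemma HasNonposDoubleIntegral.add {k k' : α → α → ℝ} (h : HasNonposDoubleIntegral μ k)
    (h' : HasNonposDoubleIntegral μ k') :
    HasNonposDoubleIntegral μ fun x y => k x y + k' x y := by
  refine ⟨h.1.add h'.1, ?_⟩
  have hsum := integral_integral_add h.1 h'.1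
  simp only [uncurry_apply_pair] at hsum
  linarith [h.2, h'.2]

lemma HasNonposDoubleIntegral.congr {k k' : α → α → ℝ} (h : HasNonposDoubleIntegral μ k)
    (hk : uncurry k =ᵐ[μ.prod μ] uncurry k') : HasNonposDoubleIntegral μ k' := by
  refine ⟨h.1.congr hk, le_of_eq_of_le (integral_congr_ae ?_) h.2⟩
  filter_upwards [Measure.ae_ae_of_ae_prod hk.symm] with x hx
  exact integral_congr_ae hx

end DoubleIntegral

section Fubini

variable {α γ l m : Type*} [MeasurableSpace α] [MeasurableSpace γ] {μ : Measure α}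
  {ν : Measure γ} [IsFiniteMeasure ν] [Fintype l] [Fintype m]
  {f : γ → α → l → ℝ} {h : γ → α → m → ℝ} {M : γ → Matrix l m ℝ} {g : α → ℝ} {C : ℝ}

lemma integrable_prod_prod_dotProduct_mulVec (hf : StronglyMeasurable (uncurry f))
    (hh : StronglyMeasurable (uncurry h)) (hM : StronglyMeasurable M) (hg : Integrable g μ)
    (hfg : ∀ r x, ‖f r x‖ ≤ g x) (hhg : ∀ r y, ‖h r y‖ ≤ g y) (hMC : ∀ᵐ r ∂ν, ‖M r‖ ≤ C) :
    Integrable (fun p : (α × α) × γ => f p.2 p.1.1 ⬝ᵥ (M p.2 *ᵥ h p.2 p.1.2))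
      ((μ.prod μ).prod ν) := by
  refine Integrable.mono' (((hg.mul_prod hg).const_mul
      (Fintype.card l * Fintype.card m * C)).comp_fst ν) ?_ ?_
  · exact ((hf.comp_measurable (measurable_snd.prodMk measurable_fst.fst)).dotProduct_mulVec
      (hM.comp_measurable measurable_snd)
      (hh.comp_measurable (measurable_snd.prodMk measurable_fst.snd))).aestronglyMeasurable
  · filter_upwards [Measure.quasiMeasurePreserving_snd.ae hMC] with p hp
    exact abs_dotProduct_mulVec_le (hfg _ _) hp (hhg _ _)

variable [SFinite μ]

theorem integral_integral_integral_dotProduct_mulVec (hf : StronglyMeasurable (uncurry f))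
    (hh : StronglyMeasurable (uncurry h)) (hM : StronglyMeasurable M) (hg : Integrable g μ)
    (hfg : ∀ r x, ‖f r x‖ ≤ g x) (hhg : ∀ r y, ‖h r y‖ ≤ g y) (hMC : ∀ᵐ r ∂ν, ‖M r‖ ≤ C) :
    ∫ x, ∫ y, ∫ r, f r x ⬝ᵥ (M r *ᵥ h r y) ∂ν ∂μ ∂μ
      = ∫ r, (∫ x, f r x ∂μ) ⬝ᵥ (M r *ᵥ ∫ y, h r y ∂μ) ∂ν := by
  have hΨ := integrable_prod_prod_dotProduct_mulVec hf hh hM hg hfg hhg hMC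
  have hfr : ∀ r, Integrable (f r) μ := fun r =>
    hg.mono' (hf.comp_measurable measurable_prodMk_left).aestronglyMeasurable
      (ae_of_all _ (hfg r))
  have hhr : ∀ r, Integrable (h r) μ := fun r =>
    hg.mono' (hh.comp_measurable measurable_prodMk_left).aestronglyMeasurable
      (ae_of_all _ (hhg r))
  rw [← integral_prod _ hΨ.integral_prod_left, integral_integral_swap hΨ]
  refine integral_congr_ae ?_
  filter_upwards [hΨ.prod_left_ae] with r hr
  rw [integral_prod _ hr]
  simp only [integral_dotProduct_mulVec_right _ _ (hhr r)]
  exact integral_dotProduct_mulVec_left _ _ (hfr r)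

theorem HasNonposDoubleIntegral.of_dotProduct_mulVec (hf : StronglyMeasurable (uncurry f))
    (hh : StronglyMeasurable (uncurry h)) (hM : StronglyMeasurable M) (hg : Integrable g μ)
    (hfg : ∀ r x, ‖f r x‖ ≤ g x) (hhg : ∀ r y, ‖h r y‖ ≤ g y) (hMC : ∀ᵐ r ∂ν, ‖M r‖ ≤ C)
    (hneg : ∫ r, (∫ x, f r x ∂μ) ⬝ᵥ (M r *ᵥ ∫ y, h r y ∂μ) ∂ν ≤ 0) :
    HasNonposDoubleIntegral μ fun x y => ∫ r, f r x ⬝ᵥ (M r *ᵥ h r y) ∂ν :=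
  ⟨(integrable_prod_prod_dotProduct_mulVec hf hh hM hg hfg hhg hMC).integral_prod_left,
    (integral_integral_integral_dotProduct_mulVec hf hh hM hg hfg hhg hMC).trans_le hneg⟩

end Fubini

lemma intervalIntegral_eq_setIntegral_indicator {E : Type*} [NormedAddCommGroup E]
    [NormedSpace ℝ E] {a b c : ℝ} (hac : a ≤ c) (hcb : c ≤ b) (f : ℝ → E) :
    ∫ x in c..b, f x = ∫ x in Ioc a b, (Ioi c).indicator f x := by
  rw [intervalIntegral.integral_of_le hcb, MeasureTheory.integral_indicator measurableSet_Ioi,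
    Measure.restrict_restrict measurableSet_Ioi, inter_comm, Ioc_inter_Ioi, max_eq_right hac]

lemma ae_restrict_Ioc_prod_mem_Ioo {a b : ℝ} :
    ∀ᵐ q ∂((volume.restrict (Ioc a b)).prod (volume.restrict (Ioc a b))),
      q ∈ Ioo a b ×ˢ Ioo a b := by
  rw [Measure.restrict_congr_set Ioo_ae_eq_Ioc.symm, Measure.prod_restrict]
  exact ae_restrict_mem (measurableSet_Ioo.prod measurableSet_Ioo)

lemma ae_norm_le_of_forall_mem_Icc {E : Type*} [Norm E] {F : ℝ → ℝ → E} {a b C : ℝ}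
    (h : ∀ τ ∈ Icc a b, ∀ σ ∈ Icc a b, ‖F τ σ‖ ≤ C) :
    ∀ᵐ q ∂((volume.restrict (Ioc a b)).prod (volume.restrict (Ioc a b))), ‖F q.1 q.2‖ ≤ C := by
  filter_upwards [ae_restrict_Ioc_prod_mem_Ioo] with q hq
  exact h _ (Ioo_subset_Icc_self hq.1) _ (Ioo_subset_Icc_self hq.2)

section Volterra

variable {l m : Type*} [Fintype m]

/-- `∫ x in Ioc a b, volterraIntegrand K a b w σ x` is `∫_a^σ K(σ,x) w(x) dx` for `σ ∈ (a,b]`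
and `0` otherwise. Cutting off outside `a ≤ x < σ ≤ b`, where `K` need not be bounded, makes the
integrand dominated by `‖w x‖` uniformly in `σ`. -/
noncomputable def volterraIntegrand (K : ℝ → ℝ → Matrix l m ℝ) (a b : ℝ) (w : ℝ → m → ℝ)
    (σ x : ℝ) : l → ℝ :=
  if a ≤ x ∧ x < σ ∧ σ ≤ b then K σ x *ᵥ w x else 0

variable {K : ℝ → ℝ → Matrix l m ℝ} {a b C CP : ℝ} {w : ℝ → m → ℝ}

lemma stronglyMeasurable_volterraIntegrand (hK : StronglyMeasurable (uncurry K))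
    (hw : StronglyMeasurable w) : StronglyMeasurable (uncurry (volterraIntegrand K a b w)) := by
  refine StronglyMeasurable.ite ?_ ?_ stronglyMeasurable_const
  · exact (measurableSet_le measurable_const measurable_snd).inter
      ((measurableSet_lt measurable_snd measurable_fst).inter
        (measurableSet_le measurable_fst measurable_const))
  · exact (continuous_fst.matrix_mulVec continuous_snd).comp_stronglyMeasurable
      (hK.prodMk (hw.comp_measurable measurable_snd))

variable [Fintype l]

lemma norm_volterraIntegrand_le (hKC : ∀ σ x, a ≤ x → x ≤ σ → σ ≤ b → ‖K σ x‖ ≤ C)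
    (hC : 0 ≤ C) (σ x : ℝ) : ‖volterraIntegrand K a b w σ x‖ ≤ Fintype.card m * C * ‖w x‖ := by
  unfold volterraIntegrand
  split_ifs with h
  · exact (Matrix.norm_mulVec_le_card_mul _ _).trans
      (by gcongr; exact hKC σ x h.1 h.2.1.le h.2.2)
  · rw [norm_zero]
    positivity

lemma volterraIntegrand_dotProduct_mulVec {k : Type*} [Fintype k] {K' : ℝ → ℝ → Matrix k m ℝ}
    {P : Matrix l k ℝ} {t s σ τ : ℝ} (ht : a ≤ t) (hs : a ≤ s) (hσ : σ ≤ b) (hτ : τ ≤ b) :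
    volterraIntegrand K a b w σ t ⬝ᵥ (P *ᵥ volterraIntegrand K' a b w τ s)
      = if t < σ ∧ s < τ then w t ⬝ᵥ (((K σ t)ᵀ * P * K' τ s) *ᵥ w s) else 0 := by
  simp only [volterraIntegrand, dotProduct_transpose_mul_mul_mulVec, ht, hs, hσ, hτ, true_and,
    and_true]
  split_ifs <;> simp_all

lemma memLp_integral_volterraIntegrand (hK : StronglyMeasurable (uncurry K))
    (hKC : ∀ σ x, a ≤ x → x ≤ σ → σ ≤ b → ‖K σ x‖ ≤ C) (hC : 0 ≤ C)
    (hw : StronglyMeasurable w) (hwi : Integrable w (volume.restrict (Ioc a b))) (p : ENNReal) :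
    MemLp (fun σ => ∫ x in Ioc a b, volterraIntegrand K a b w σ x) p
      (volume.restrict (Ioc a b)) :=
  MemLp.of_bound
    (stronglyMeasurable_volterraIntegrand hK hw).integral_prod_right'.aestronglyMeasurable _
    (ae_of_all _ fun σ => norm_integral_le_of_norm_le (hwi.norm.const_mul _)
      (ae_of_all _ (norm_volterraIntegrand_le hKC hC σ)))

lemma dotProduct_intervalIntegral_mulVec_eq_integral_volterraIntegrand
    {P : ℝ → Matrix l l ℝ} (hK : StronglyMeasurable (uncurry K))
    (hKC : ∀ σ x, a ≤ x → x ≤ σ → σ ≤ b → ‖K σ x‖ ≤ C) (hPm : StronglyMeasurable P)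
    (hPC : ∀ σ ∈ Icc a b, ‖P σ‖ ≤ CP) {t s : ℝ} (ht : t ∈ Ioo a b) (hs : s ∈ Ioo a b) :
    w t ⬝ᵥ ((∫ σ in (max t s)..b, (K σ t)ᵀ * P σ * K σ s) *ᵥ w s)
      = ∫ σ in Ioc a b,
          volterraIntegrand K a b w σ t ⬝ᵥ (P σ *ᵥ volterraIntegrand K a b w σ s) := by
  have hN : StronglyMeasurable fun σ => (K σ t)ᵀ * P σ * K σ s :=
    (hK.comp_measurable (measurable_id.prodMk measurable_const)).transpose_mul_mul hPm
      (hK.comp_measurable (measurable_id.prodMk measurable_const))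
  have hint : Integrable ((Ioi (max t s)).indicator fun σ => (K σ t)ᵀ * P σ * K σ s)
      (volume.restrict (Ioc a b)) := by
    refine integrable_indicator_of_ae_bound measurableSet_Ioi hN.aestronglyMeasurable
      (C := Fintype.card l * Fintype.card l * C * CP * C) ?_
    filter_upwards [ae_restrict_mem measurableSet_Ioc] with σ hσ hσts
    rw [mem_Ioi, max_lt_iff] at hσts
    exact Matrix.norm_transpose_mul_mul_le (hKC σ t ht.1.le hσts.1.le hσ.2)
      (hPC σ (Ioc_subset_Icc_self hσ)) (hKC σ s hs.1.le hσts.2.le hσ.2)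
  rw [intervalIntegral_eq_setIntegral_indicator (le_max_of_le_left ht.1.le)
    (max_le ht.2.le hs.2.le), ← integral_dotProduct_mulVec_matrix _ _ hint]
  refine setIntegral_congr_fun measurableSet_Ioc fun σ hσ => ?_
  rw [volterraIntegrand_dotProduct_mulVec ht.1.le hs.1.le hσ.2 hσ.2]
  simp only [indicator_apply, mem_Ioi, max_lt_iff]
  split_ifs <;> simp

lemma dotProduct_intervalIntegral_intervalIntegral_mulVec_eq_integral_volterraIntegrand
    {P : ℝ → ℝ → Matrix l l ℝ} (hK : StronglyMeasurable (uncurry K))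
    (hKC : ∀ σ x, a ≤ x → x ≤ σ → σ ≤ b → ‖K σ x‖ ≤ C) (hPm : StronglyMeasurable (uncurry P))
    (hPC : ∀ τ ∈ Icc a b, ∀ σ ∈ Icc a b, ‖P τ σ‖ ≤ CP) {t s : ℝ} (ht : t ∈ Ioo a b)
    (hs : s ∈ Ioo a b) :
    w t ⬝ᵥ ((∫ τ in t..b, ∫ σ in s..b, (K τ t)ᵀ * P τ σ * K σ s) *ᵥ w s)
      = ∫ q, volterraIntegrand K a b w q.1 t ⬝ᵥ (P q.1 q.2 *ᵥ volterraIntegrand K a b w q.2 s)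
          ∂((volume.restrict (Ioc a b)).prod (volume.restrict (Ioc a b))) := by
  set N : ℝ → ℝ → Matrix m m ℝ := fun τ σ => (K τ t)ᵀ * P τ σ * K σ s
  have hN : StronglyMeasurable (uncurry N) :=
    (hK.comp_measurable (measurable_fst.prodMk measurable_const)).transpose_mul_mul hPm
      (hK.comp_measurable (measurable_snd.prodMk measurable_const))
  have hint : Integrable ((Ioi t ×ˢ Ioi s).indicator (uncurry N))
      ((volume.restrict (Ioc a b)).prod (volume.restrict (Ioc a b))) := by
    refine integrable_indicator_of_ae_bound (measurableSet_Ioi.prod measurableSet_Ioi)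
      hN.aestronglyMeasurable (C := Fintype.card l * Fintype.card l * C * CP * C) ?_
    filter_upwards [ae_restrict_Ioc_prod_mem_Ioo] with q hq hqts
    exact Matrix.norm_transpose_mul_mul_le (hKC q.1 t ht.1.le hqts.1.le hq.1.2.le)
      (hPC q.1 (Ioo_subset_Icc_self hq.1) q.2 (Ioo_subset_Icc_self hq.2))
      (hKC q.2 s hs.1.le hqts.2.le hq.2.2.le)
  have hiter : ∫ τ in t..b, ∫ σ in s..b, N τ σ
      = ∫ q, (Ioi t ×ˢ Ioi s).indicator (uncurry N) q
          ∂((volume.restrict (Ioc a b)).prod (volume.restrict (Ioc a b))) := by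
    rw [integral_prod _ hint, intervalIntegral_eq_setIntegral_indicator ht.1.le ht.2.le]
    simp only [intervalIntegral_eq_setIntegral_indicator hs.1.le hs.2.le]
    refine integral_congr_ae (ae_of_all _ fun τ => ?_)
    by_cases hτ : t < τ <;> simp [indicator_apply, hτ]
  rw [hiter, ← integral_dotProduct_mulVec_matrix _ _ hint]
  refine integral_congr_ae ?_
  filter_upwards [ae_restrict_Ioc_prod_mem_Ioo] with q hq
  rw [volterraIntegrand_dotProduct_mulVec ht.1.le hs.1.le hq.1.2.le hq.2.2.le]
  simp only [indicator_apply, mem_prod, mem_Ioi, uncurry_def, N]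
  split_ifs <;> simp

theorem hasNonposDoubleIntegral_endpoint {P : Matrix l l ℝ}
    (hK : StronglyMeasurable (uncurry K)) (hKC : ∀ σ x, a ≤ x → x ≤ σ → σ ≤ b → ‖K σ x‖ ≤ C)
    (hC : 0 ≤ C) (hw : StronglyMeasurable w) (hwi : Integrable w (volume.restrict (Ioc a b)))
    (hP : ∀ z, z ⬝ᵥ (P *ᵥ z) ≤ 0) :
    HasNonposDoubleIntegral (volume.restrict (Ioc a b))
      fun t s => w t ⬝ᵥ (((K b t)ᵀ * P * K b s) *ᵥ w s) := by
  have hu := stronglyMeasurable_volterraIntegrand (a := a) (b := b) hK hw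
  refine (HasNonposDoubleIntegral.of_dotProduct_mulVec (ν := Measure.dirac b) (M := fun _ => P)
    hu hu stronglyMeasurable_const (hwi.norm.const_mul _) (norm_volterraIntegrand_le hKC hC)
    (norm_volterraIntegrand_le hKC hC) (ae_of_all _ fun _ => le_rfl)
    (by rw [integral_dirac]; exact hP _)).congr ?_
  filter_upwards [ae_restrict_Ioc_prod_mem_Ioo] with q hq
  simp only [uncurry_def]
  rw [integral_dirac, volterraIntegrand_dotProduct_mulVec hq.1.1.le hq.2.1.le le_rfl le_rfl,
    if_pos ⟨hq.1.2, hq.2.2⟩]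

theorem hasNonposDoubleIntegral_intervalIntegral {P : ℝ → Matrix l l ℝ}
    (hK : StronglyMeasurable (uncurry K)) (hKC : ∀ σ x, a ≤ x → x ≤ σ → σ ≤ b → ‖K σ x‖ ≤ C)
    (hC : 0 ≤ C) (hw : StronglyMeasurable w) (hwi : Integrable w (volume.restrict (Ioc a b)))
    (hPm : StronglyMeasurable P) (hPC : ∀ σ ∈ Icc a b, ‖P σ‖ ≤ CP)
    (hP : ∀ᵐ σ ∂(volume.restrict (Ioc a b)), ∀ z, z ⬝ᵥ (P σ *ᵥ z) ≤ 0) :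
    HasNonposDoubleIntegral (volume.restrict (Ioc a b))
      fun t s => w t ⬝ᵥ ((∫ σ in (max t s)..b, (K σ t)ᵀ * P σ * K σ s) *ᵥ w s) := by
  have hu := stronglyMeasurable_volterraIntegrand (a := a) (b := b) hK hw
  refine (HasNonposDoubleIntegral.of_dotProduct_mulVec (ν := volume.restrict (Ioc a b)) (C := CP)
    hu hu hPm (hwi.norm.const_mul _) (norm_volterraIntegrand_le hKC hC)
    (norm_volterraIntegrand_le hKC hC) ?_ ?_).congr ?_
  · filter_upwards [ae_restrict_mem measurableSet_Ioc] with σ hσ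
      using hPC σ (Ioc_subset_Icc_self hσ)
  · exact integral_nonpos_of_ae (hP.mono fun σ hσ => hσ _)
  · filter_upwards [ae_restrict_Ioc_prod_mem_Ioo] with q hq
    exact (dotProduct_intervalIntegral_mulVec_eq_integral_volterraIntegrand hK hKC hPm hPC
      hq.1 hq.2).symm

theorem hasNonposDoubleIntegral_intervalIntegral_intervalIntegral {P : ℝ → ℝ → Matrix l l ℝ}
    (hK : StronglyMeasurable (uncurry K)) (hKC : ∀ σ x, a ≤ x → x ≤ σ → σ ≤ b → ‖K σ x‖ ≤ C)
    (hC : 0 ≤ C) (hw : StronglyMeasurable w) (hwi : Integrable w (volume.restrict (Ioc a b)))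
    (hPm : StronglyMeasurable (uncurry P)) (hPC : ∀ τ ∈ Icc a b, ∀ σ ∈ Icc a b, ‖P τ σ‖ ≤ CP)
    (hP : ∀ z : ℝ → l → ℝ, MemLp z 2 (volume.restrict (Ioc a b)) →
      ∫ τ in Ioc a b, ∫ σ in Ioc a b, z τ ⬝ᵥ (P τ σ *ᵥ z σ) ≤ 0) :
    HasNonposDoubleIntegral (volume.restrict (Ioc a b))
      fun t s => w t ⬝ᵥ ((∫ τ in t..b, ∫ σ in s..b, (K τ t)ᵀ * P τ σ * K σ s) *ᵥ w s) := by
  have hu := stronglyMeasurable_volterraIntegrand (a := a) (b := b) hK hw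
  have hPC' := ae_norm_le_of_forall_mem_Icc hPC
  have hz := memLp_integral_volterraIntegrand hK hKC hC hw hwi 2
  refine (HasNonposDoubleIntegral.of_dotProduct_mulVec
    (f := fun q : ℝ × ℝ => volterraIntegrand K a b w q.1)
    (h := fun q : ℝ × ℝ => volterraIntegrand K a b w q.2) (M := fun q => P q.1 q.2) (C := CP)
    (hu.comp_measurable (measurable_fst.fst.prodMk measurable_snd))
    (hu.comp_measurable (measurable_fst.snd.prodMk measurable_snd)) hPm
    (hwi.norm.const_mul _) (fun q => norm_volterraIntegrand_le hKC hC q.1)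
    (fun q => norm_volterraIntegrand_le hKC hC q.2) hPC' ?_).congr ?_
  · exact (integral_prod _ (integrable_uncurry_dotProduct_mulVec hPm hPC'
      (hz.integrable one_le_two) (hz.integrable one_le_two))).trans_le (hP _ hz)
  · filter_upwards [ae_restrict_Ioc_prod_mem_Ioo] with q hq
    exact (dotProduct_intervalIntegral_intervalIntegral_mulVec_eq_integral_volterraIntegrand hK
      hKC hPm hPC hq.1 hq.2).symm

end Volterra

theorem L22_kernel_nonpos_general
    (p n : ℕ) (t0 t1 : ℝ)
    (C1 : ℝ → ℝ → Matrix (Fin p) (Fin n) ℝ)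
    (P0 : Matrix (Fin p) (Fin p) ℝ)
    (P1 : ℝ → Matrix (Fin p) (Fin p) ℝ)
    (P2 : ℝ → ℝ → Matrix (Fin p) (Fin p) ℝ)
    (R2 : ℝ → ℝ → Matrix (Fin n) (Fin n) ℝ)
    -- C₁ bounded measurable on Δ
    (hC1meas : ∀ i j, Measurable fun q : ℝ × ℝ => C1 q.1 q.2 i j)
    (hC1bdd : ∃ M, ∀ t s, t0 ≤ s → s ≤ t → t ≤ t1 → ∀ i j, |C1 t s i j| ≤ M)
    -- P₀ symmetric negative semidefinite
    (hP0 : ∀ z : Fin p → ℝ, z ⬝ᵥ (P0 *ᵥ z) ≤ 0)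
    -- P₁ bounded measurable, symmetric negative semidefinite a.e.
    (hP1meas : ∀ i j, Measurable fun t => P1 t i j)
    (hP1bdd : ∃ M, ∀ t ∈ Set.Icc t0 t1, ∀ i j, |P1 t i j| ≤ M)
    (hP1 : ∀ᵐ t ∂(volume.restrict (Set.Ioc t0 t1)),
      (P1 t)ᵀ = P1 t ∧ ∀ z : Fin p → ℝ, z ⬝ᵥ (P1 t *ᵥ z) ≤ 0)
    -- P₂ bounded measurable, symmetric, with nonpositive integral quadratic form
    (hP2meas : ∀ i j, Measurable fun q : ℝ × ℝ => P2 q.1 q.2 i j)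
    (hP2bdd : ∃ M, ∀ t ∈ Set.Icc t0 t1, ∀ s ∈ Set.Icc t0 t1, ∀ i j, |P2 t s i j| ≤ M)
    (hP2 : ∀ z : ℝ → Fin p → ℝ, MemLp z 2 (volume.restrict (Set.Ioc t0 t1)) →
      (∫ t in Set.Ioc t0 t1, ∫ s in Set.Ioc t0 t1, z t ⬝ᵥ (P2 t s *ᵥ z s)) ≤ 0)
    -- R₂ bounded measurable, symmetric, with nonpositive integral quadratic form
    (hR2meas : ∀ i j, Measurable fun q : ℝ × ℝ => R2 q.1 q.2 i j)
    (hR2bdd : ∃ M, ∀ t ∈ Set.Icc t0 t1, ∀ s ∈ Set.Icc t0 t1, ∀ i j, |R2 t s i j| ≤ M)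
    (hR2 : ∀ w : ℝ → Fin n → ℝ, MemLp w 2 (volume.restrict (Set.Ioc t0 t1)) →
      (∫ t in Set.Ioc t0 t1, ∫ s in Set.Ioc t0 t1, w t ⬝ᵥ (R2 t s *ᵥ w s)) ≤ 0) :
    ∀ w : ℝ → Fin n → ℝ, MemLp w 2 (volume.restrict (Set.Ioc t0 t1)) →
      (∫ t in Set.Ioc t0 t1, ∫ s in Set.Ioc t0 t1,
        w t ⬝ᵥ (((C1 t1 t)ᵀ * P0 * C1 t1 s
          + (∫ σ in (max t s)..t1, (C1 σ t)ᵀ * P1 σ * C1 σ s)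
          + (∫ τ in t..t1, ∫ σ in s..t1, (C1 τ t)ᵀ * P2 τ σ * C1 σ s)
          + R2 t s) *ᵥ w s)) ≤ 0 := by
  intro w hw
  obtain ⟨v, hvm, hwv⟩ := hw.aestronglyMeasurable
  have hv : MemLp v 2 (volume.restrict (Ioc t0 t1)) := hw.ae_eq hwv
  have hvi := hv.integrable one_le_two
  obtain ⟨MC, hMC⟩ := hC1bdd
  obtain ⟨M1, hM1⟩ := hP1bdd
  obtain ⟨M2, hM2⟩ := hP2bdd
  obtain ⟨MR, hMR⟩ := hR2bdd
  have hC1 := Matrix.stronglyMeasurable_of_entries hC1meas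
  have hC1C : ∀ σ x, t0 ≤ x → x ≤ σ → σ ≤ t1 → ‖C1 σ x‖ ≤ max MC 0 :=
    fun σ x h₁ h₂ h₃ => Matrix.norm_le_max_of_abs_le (hMC σ x h₁ h₂ h₃)
  have hR2C := ae_norm_le_of_forall_mem_Icc fun τ hτ σ hσ =>
    Matrix.norm_le_max_of_abs_le (hMR τ hτ σ hσ)
  refine (((((hasNonposDoubleIntegral_endpoint hC1 hC1C (le_max_right _ _) hvm hvi hP0).add
    (hasNonposDoubleIntegral_intervalIntegral hC1 hC1C (le_max_right _ _) hvm hvi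
      (Matrix.stronglyMeasurable_of_entries hP1meas)
      (fun σ hσ => Matrix.norm_le_max_of_abs_le (hM1 σ hσ)) (hP1.mono fun σ h => h.2))).add
    (hasNonposDoubleIntegral_intervalIntegral_intervalIntegral hC1 hC1C (le_max_right _ _) hvm hvi
      (Matrix.stronglyMeasurable_of_entries hP2meas)
      (fun τ hτ σ hσ => Matrix.norm_le_max_of_abs_le (hM2 τ hτ σ hσ)) hP2)).add
    ⟨integrable_uncurry_dotProduct_mulVec
      (Matrix.stronglyMeasurable_of_entries hR2meas) hR2C hvi hvi, hR2 v hv⟩).congr ?_).2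
  filter_upwards [Measure.quasiMeasurePreserving_fst.ae hwv,
    Measure.quasiMeasurePreserving_snd.ae hwv] with q h₁ h₂
  simp only [uncurry_def, h₁, h₂, Matrix.add_mulVec, dotProduct_add]

/-- **Nonpositivity of the kernel `L₂₂` of (4.6)**: if `P₀`, `P₁`, `P₂` and `R₂` are
negative (semi)definite as indicated, then `∫∫ w(t)ᵀL₂₂(t,s)w(s) ds dt ≤ 0` for every
`w ∈ L²(t₀,t₁;ℝⁿ)`. -/
theorem L22_kernel_nonpos
    (p n : ℕ) (t0 t1 : ℝ) (ht : t0 < t1)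
    (C1 : ℝ → ℝ → Matrix (Fin p) (Fin n) ℝ)
    (P0 : Matrix (Fin p) (Fin p) ℝ)
    (P1 : ℝ → Matrix (Fin p) (Fin p) ℝ)
    (P2 : ℝ → ℝ → Matrix (Fin p) (Fin p) ℝ)
    (R2 : ℝ → ℝ → Matrix (Fin n) (Fin n) ℝ)
    -- C₁ bounded measurable on Δ
    (hC1meas : ∀ i j, Measurable fun q : ℝ × ℝ => C1 q.1 q.2 i j)
    (hC1bdd : ∃ M, ∀ t s, t0 ≤ s → s ≤ t → t ≤ t1 → ∀ i j, |C1 t s i j| ≤ M)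
    -- P₀ symmetric negative semidefinite
    (hP0sym : P0ᵀ = P0)
    (hP0 : ∀ z : Fin p → ℝ, z ⬝ᵥ (P0 *ᵥ z) ≤ 0)
    -- P₁ bounded measurable, symmetric negative semidefinite a.e.
    (hP1meas : ∀ i j, Measurable fun t => P1 t i j)
    (hP1bdd : ∃ M, ∀ t ∈ Set.Icc t0 t1, ∀ i j, |P1 t i j| ≤ M)
    (hP1 : ∀ᵐ t ∂(volume.restrict (Set.Ioc t0 t1)),
      (P1 t)ᵀ = P1 t ∧ ∀ z : Fin p → ℝ, z ⬝ᵥ (P1 t *ᵥ z) ≤ 0)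
    -- P₂ bounded measurable, symmetric, with nonpositive integral quadratic form
    (hP2meas : ∀ i j, Measurable fun q : ℝ × ℝ => P2 q.1 q.2 i j)
    (hP2bdd : ∃ M, ∀ t ∈ Set.Icc t0 t1, ∀ s ∈ Set.Icc t0 t1, ∀ i j, |P2 t s i j| ≤ M)
    (hP2sym : ∀ t s, (P2 t s)ᵀ = P2 s t)
    (hP2 : ∀ z : ℝ → Fin p → ℝ, MemLp z 2 (volume.restrict (Set.Ioc t0 t1)) →
      (∫ t in Set.Ioc t0 t1, ∫ s in Set.Ioc t0 t1, z t ⬝ᵥ (P2 t s *ᵥ z s)) ≤ 0)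
    -- R₂ bounded measurable, symmetric, with nonpositive integral quadratic form
    (hR2meas : ∀ i j, Measurable fun q : ℝ × ℝ => R2 q.1 q.2 i j)
    (hR2bdd : ∃ M, ∀ t ∈ Set.Icc t0 t1, ∀ s ∈ Set.Icc t0 t1, ∀ i j, |R2 t s i j| ≤ M)
    (hR2sym : ∀ t s, (R2 t s)ᵀ = R2 s t)
    (hR2 : ∀ w : ℝ → Fin n → ℝ, MemLp w 2 (volume.restrict (Set.Ioc t0 t1)) →
      (∫ t in Set.Ioc t0 t1, ∫ s in Set.Ioc t0 t1, w t ⬝ᵥ (R2 t s *ᵥ w s)) ≤ 0) :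
    ∀ w : ℝ → Fin n → ℝ, MemLp w 2 (volume.restrict (Set.Ioc t0 t1)) →
      (∫ t in Set.Ioc t0 t1, ∫ s in Set.Ioc t0 t1,
        w t ⬝ᵥ (((C1 t1 t)ᵀ * P0 * C1 t1 s
          + (∫ σ in (max t s)..t1, (C1 σ t)ᵀ * P1 σ * C1 σ s)
          + (∫ τ in t..t1, ∫ σ in s..t1, (C1 τ t)ᵀ * P2 τ σ * C1 σ s)
          + R2 t s) *ᵥ w s)) ≤ 0 :=
  L22_kernel_nonpos_general p n t0 t1 C1 P0 P1 P2 R2 hC1meas hC1bdd hP0 hP1meas hP1bdd hP1 hP2meas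
    hP2bdd hP2 hR2meas hR2bdd hR2
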